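/- arXiv:2105.12216 — 3 statements merged into one kernel-verified Lean document; each statement's English description precedes it below -/
import Mathlib

section
/- Let s_1, …, s_l : X → ℝ be functions on a set X, let p_1, …, p_{l-1} ∈ X, and define V(x) = max_{σ ∈ S_l} [ s_{σ(1)}(x) + Σ_{i=2}^{l} s_{σ(i)}(p_{i-1}) ]. Then for each k ∈ {1, …, l-1}, the maximum in V(p_k) is attained by at least two distinct indices i = σ(1); i.e., there exist i ≠ j such that s_i(p_k) + c_i = s_j(p_k) + c_j = V(p_k), where c_i = max_{σ ∈ S_l, σ(1)=i} Σ_{m=2}^{l} s_{σ(m)}(p_{m-1}). -/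
/-!
`V(x)` is the maximum over `σ ∈ S_l` of the term `s_{σ(1)}(x) + Σ_m s_{σ(m+1)}(p_m)`, and the
maximum over those `σ` with `σ(1) = i` is `s_i(x) + c_i`. At `x = p_k` the first row and the
row of `p_k` coincide, so if `σ` is a maximising permutation then so is `σ ∘ (1 k+1)`; the two
give the distinct indices `σ(1)` and `σ(k+1)` at which `V(p_k)` is attained.
-/

open Finset

/-- For sections `s_1, …, s_l` and points `p_1, …, p_{l-1}` (here `l = n + 1`),
the coefficient `c_i = max_{σ ∈ S_l, σ(1) = i} Σ_{m=2}^{l} s_{σ(m)}(p_{m-1})`,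
computed in `T = ℝ ∪ {-∞}`. -/
noncomputable def vandermondeCoeff {X : Type*} (n : ℕ) (s : Fin (n + 1) → X → ℝ)
    (p : Fin n → X) (i : Fin (n + 1)) : WithBot ℝ :=
  (Finset.univ.filter fun σ : Equiv.Perm (Fin (n + 1)) => σ 0 = i).sup
    fun σ => ((∑ m : Fin n, s (σ m.succ) (p m) : ℝ) : WithBot ℝ)

/-- The tropical Vandermonde section
`V(x) = max_{σ ∈ S_l} [s_{σ(1)}(x) + Σ_{i=2}^{l} s_{σ(i)}(p_{i-1})]
      = max_i (s_i(x) + c_i)`. -/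
noncomputable def vandermonde {X : Type*} (n : ℕ) (s : Fin (n + 1) → X → ℝ)
    (p : Fin n → X) (x : X) : WithBot ℝ :=
  Finset.univ.sup fun i : Fin (n + 1) =>
    ((s i x : ℝ) : WithBot ℝ) + vandermondeCoeff n s p i

namespace Vandermonde

variable {X : Type*} {n : ℕ} (s : Fin (n + 1) → X → ℝ) (p : Fin n → X)

/-- The term of `σ` in the tropical determinant with rows evaluated at `x, p_1, …, p_{l-1}`. -/
def permTerm (x : X) (σ : Equiv.Perm (Fin (n + 1))) : ℝ :=
  ∑ i, s (σ i) ((Fin.cons x p : Fin (n + 1) → X) i)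

theorem permTerm_eq (x : X) (σ : Equiv.Perm (Fin (n + 1))) :
    permTerm s p x σ = s (σ 0) x + ∑ m : Fin n, s (σ m.succ) (p m) := by
  simp [permTerm, Fin.sum_univ_succ]

theorem permTerm_mul_swap (k : Fin n) (σ : Equiv.Perm (Fin (n + 1))) :
    permTerm s p (p k) (σ * Equiv.swap 0 k.succ) = permTerm s p (p k) σ := by
  have hrows : ∀ i, (Fin.cons (p k) p : Fin (n + 1) → X) (Equiv.swap 0 k.succ i) =
      (Fin.cons (p k) p : Fin (n + 1) → X) i := by
    intro i
    rcases eq_or_ne i 0 with rfl | h0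
    · simp
    rcases eq_or_ne i k.succ with rfl | hk
    · simp
    rw [Equiv.swap_apply_of_ne_of_ne h0 hk]
  unfold permTerm
  rw [← Equiv.sum_comp (Equiv.swap 0 k.succ)
    fun i => s (σ i) ((Fin.cons (p k) p : Fin (n + 1) → X) i)]
  simp only [Equiv.Perm.mul_apply, hrows]

theorem le_add_vandermondeCoeff (x : X) (σ : Equiv.Perm (Fin (n + 1))) :
    (permTerm s p x σ : WithBot ℝ) ≤ s (σ 0) x + vandermondeCoeff n s p (σ 0) := by
  rw [permTerm_eq, WithBot.coe_add]
  gcongr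
  exact le_sup (f := fun τ : Equiv.Perm (Fin (n + 1)) =>
    ((∑ m : Fin n, s (τ m.succ) (p m) : ℝ) : WithBot ℝ)) (by simp)

theorem add_vandermondeCoeff_le_vandermonde (x : X) (i : Fin (n + 1)) :
    (s i x : WithBot ℝ) + vandermondeCoeff n s p i ≤ vandermonde n s p x :=
  le_sup (f := fun i => (s i x : WithBot ℝ) + vandermondeCoeff n s p i) (mem_univ i)

theorem vandermonde_le {x : X} {S : ℝ} (h : ∀ σ, permTerm s p x σ ≤ S) :
    vandermonde n s p x ≤ S := by
  refine Finset.sup_le fun i _ => ?_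
  have hc : vandermondeCoeff n s p i ≤ ((S - s i x : ℝ) : WithBot ℝ) := by
    refine Finset.sup_le fun σ hσ => ?_
    have := h σ
    rw [permTerm_eq, (mem_filter.mp hσ).2] at this
    exact WithBot.coe_le_coe.mpr (by linarith)
  calc (s i x : WithBot ℝ) + vandermondeCoeff n s p i
      ≤ s i x + ((S - s i x : ℝ) : WithBot ℝ) := by gcongr
    _ = S := by rw [← WithBot.coe_add, add_sub_cancel]

theorem add_vandermondeCoeff_eq_vandermonde {x : X} {σ : Equiv.Perm (Fin (n + 1))}
    (hσ : ∀ τ, permTerm s p x τ ≤ permTerm s p x σ) :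
    (s (σ 0) x : WithBot ℝ) + vandermondeCoeff n s p (σ 0) = vandermonde n s p x :=
  (add_vandermondeCoeff_le_vandermonde s p x _).antisymm
    ((vandermonde_le s p hσ).trans (le_add_vandermondeCoeff s p x σ))

end Vandermonde

open Vandermonde in
/-- At each of the points `p_1, …, p_{l-1}`, the maximum defining the tropical
Vandermonde `V` is attained by at least two distinct indices: there exist `i ≠ j`
with `s_i(p_k) + c_i = s_j(p_k) + c_j = V(p_k)`. -/
theorem vandermonde_max_attained_twice {X : Type*} (n : ℕ) (s : Fin (n + 1) → X → ℝ)
    (p : Fin n → X) (k : Fin n) :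
    ∃ i j : Fin (n + 1), i ≠ j ∧
      ((s i (p k) : ℝ) : WithBot ℝ) + vandermondeCoeff n s p i = vandermonde n s p (p k) ∧
      ((s j (p k) : ℝ) : WithBot ℝ) + vandermondeCoeff n s p j = vandermonde n s p (p k) := by
  obtain ⟨σ, -, hσ⟩ := exists_max_image univ (permTerm s p (p k)) univ_nonempty
  set τ := σ * Equiv.swap 0 k.succ
  have hτ : ∀ ρ, permTerm s p (p k) ρ ≤ permTerm s p (p k) τ := fun ρ =>
    (permTerm_mul_swap s p k σ).symm ▸ hσ ρ (mem_univ ρ)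
  refine ⟨σ 0, τ 0, ?_, add_vandermondeCoeff_eq_vandermonde s p fun ρ => hσ ρ (mem_univ ρ),
    add_vandermondeCoeff_eq_vandermonde s p hτ⟩
  simp [τ, Fin.succ_ne_zero k |>.symm]
end

section
/- Let σ ⊂ ℝ^n be a cone generated by a subset of a ℤ-basis of ℤ^n (a smooth rational cone). Then its dual cone σ^∨ = { a ∈ (ℝ^n)^* : a(x) ≥ 0 for all x ∈ σ } is also a rational polyhedral cone, and the semigroup S_σ = σ^∨ ∩ ℤ^n is finitely generated. -/
/-!
Pair `ℤⁿ` with itself by the dot product and let `e` be the basis dual to `b`. The dual cone is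
cut out by the `k` inequalities `⟨a, bᵢ⟩ ≥ 0`, and the coordinates of an integral vector `s` in
the basis `e` are exactly the numbers `⟨s, bᵢ⟩`. Hence `σ^∨ ∩ ℤⁿ` consists of the integral
combinations of `e` whose first `k` coefficients are nonnegative, which is the monoid generated by
`e₁, …, eₙ` and `-eₖ₊₁, …, -eₙ`.
-/

open Finset Matrix

section Cone

variable {ι κ R : Type*} [Fintype ι] [CommSemiring R] [PartialOrder R]

def nonnegSpan [Fintype κ] (v : κ → ι → R) : Set (ι → R) :=
  {x | ∃ c : κ → R, (∀ i, 0 ≤ c i) ∧ x = ∑ i, c i • v i}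

def dualCone (σ : Set (ι → R)) : Set (ι → R) :=
  {a | ∀ x ∈ σ, 0 ≤ a ⬝ᵥ x}

theorem dualCone_nonnegSpan [Fintype κ] [IsOrderedRing R] (v : κ → ι → R) :
    dualCone (nonnegSpan v) = {a | ∀ i, 0 ≤ a ⬝ᵥ v i} := by
  classical
  ext a
  constructor
  · intro h i
    exact h (v i) ⟨Pi.single i 1, fun j => (Pi.single_nonneg.2 zero_le_one : (0 : κ → R) ≤ _) j,
      by simp⟩
  · rintro h _ ⟨c, hc, rfl⟩
    rw [dotProduct_sum]
    exact sum_nonneg fun i _ => by rw [dotProduct_smul]; exact smul_nonneg (hc i) (h i)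

end Cone

theorem AddSubmonoid.zsmul_mem_of_neg_mem {M : Type*} [AddCommGroup M] {S : AddSubmonoid M}
    {x : M} (hx : x ∈ S) (hnx : -x ∈ S) (z : ℤ) : z • x ∈ S := by
  obtain ⟨n, rfl | rfl⟩ := Int.eq_nat_or_neg z
  · simpa using nsmul_mem hx n
  · simpa using nsmul_mem hnx n

namespace Module.Basis

noncomputable def dotProductDualBasis {ι R : Type*} [Fintype ι] [DecidableEq ι] [CommRing R]
    (b : Basis ι R (ι → R)) : Basis ι R (ι → R) :=
  b.dualBasis.map (dotProductEquiv R ι).symm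

@[simp]
theorem dotProductDualBasis_repr {ι R : Type*} [Fintype ι] [DecidableEq ι] [CommRing R]
    (b : Basis ι R (ι → R)) (s : ι → R) (i : ι) :
    b.dotProductDualBasis.repr s i = s ⬝ᵥ b i := by
  simp [dotProductDualBasis]

variable {ι M : Type*} [AddCommGroup M] (c : Basis ι ℤ M) (P : Set ι)

theorem repr_nonneg_of_mem_closure {m : M}
    (hm : m ∈ AddSubmonoid.closure (Set.range c ∪ (-⇑c) '' Pᶜ)) :
    ∀ i ∈ P, 0 ≤ c.repr m i := by
  induction hm using AddSubmonoid.closure_induction with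
  | mem x hx =>
    intro i hi
    rcases hx with ⟨j, rfl⟩ | ⟨j, hj, rfl⟩
    · rw [c.repr_self]
      exact Finsupp.single_nonneg.2 zero_le_one i
    · have hji : j ≠ i := by rintro rfl; exact hj hi
      simp [hji]
  | zero => simp
  | add x y _ _ hx hy => intro i hi; simpa using add_nonneg (hx i hi) (hy i hi)

theorem mem_closure_of_repr_nonneg [Fintype ι] {m : M} (hm : ∀ i ∈ P, 0 ≤ c.repr m i) :
    m ∈ AddSubmonoid.closure (Set.range c ∪ (-⇑c) '' Pᶜ) := by
  rw [← c.sum_repr m]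
  refine AddSubmonoid.sum_mem _ fun i _ => ?_
  have hc : c i ∈ AddSubmonoid.closure (Set.range c ∪ (-⇑c) '' Pᶜ) :=
    AddSubmonoid.subset_closure (.inl ⟨i, rfl⟩)
  by_cases hi : i ∈ P
  · lift c.repr m i to ℕ using hm i hi with z
    simpa using nsmul_mem hc z
  · exact AddSubmonoid.zsmul_mem_of_neg_mem hc
      (AddSubmonoid.subset_closure (.inr ⟨i, hi, rfl⟩)) _

theorem mem_closure_iff_repr_nonneg [Fintype ι] (m : M) :
    m ∈ AddSubmonoid.closure (Set.range c ∪ (-⇑c) '' Pᶜ) ↔ ∀ i ∈ P, 0 ≤ c.repr m i :=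
  ⟨c.repr_nonneg_of_mem_closure P, c.mem_closure_of_repr_nonneg P⟩

end Module.Basis

/-- Let `σ ⊂ ℝ^n` be the cone generated by the first `k` vectors of a `ℤ`-basis of
`ℤ^n` (a smooth rational cone). Then its dual cone
`σ^∨ = {a : a(x) ≥ 0 for all x ∈ σ}` (with the dual space identified with `ℝ^n`
via the standard pairing) is again a rational polyhedral cone, i.e. a finite
intersection of half-spaces with integral normals, and the semigroup
`S_σ = σ^∨ ∩ ℤ^n` is finitely generated (Gordan's lemma in the smooth case). -/
theorem smooth_cone_dual_rational_and_semigroup_fg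
    (n k : ℕ) (hk : k ≤ n) (b : Module.Basis (Fin n) ℤ (Fin n → ℤ))
    (σ : Set (Fin n → ℝ))
    (hσ : σ = {x | ∃ c : Fin k → ℝ, (∀ i, 0 ≤ c i) ∧
      x = ∑ i : Fin k, c i • fun j => ((b (Fin.castLE hk i)) j : ℝ)})
    (σv : Set (Fin n → ℝ))
    (hσv : σv = {a | ∀ x ∈ σ, 0 ≤ ∑ j, a j * x j}) :
    (∃ (m : ℕ) (d : Fin m → Fin n → ℤ),
        σv = {a | ∀ i : Fin m, 0 ≤ ∑ j, (d i j : ℝ) * a j}) ∧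
    (∃ G : Finset (Fin n → ℤ),
        (∀ g ∈ G, (fun j => ((g j : ℤ) : ℝ)) ∈ σv) ∧
        ∀ s : Fin n → ℤ, (fun j => ((s j : ℤ) : ℝ)) ∈ σv ↔
          s ∈ AddSubmonoid.closure (G : Set (Fin n → ℤ))) := by
  subst hσ
  obtain rfl : σv = {a | ∀ i : Fin k, 0 ≤ a ⬝ᵥ fun j => (b (Fin.castLE hk i) j : ℝ)} :=
    hσv.trans (dualCone_nonnegSpan _)
  refine ⟨⟨k, fun i => b (Fin.castLE hk i), ?_⟩, ?_⟩
  · ext a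
    simp [dotProduct, mul_comm]
  set e := b.dotProductDualBasis
  set S := Set.range e ∪ (-⇑e) '' (Set.range (Fin.castLE hk))ᶜ
  have hS : ∀ s : Fin n → ℤ,
      (fun j => (s j : ℝ)) ∈ {a | ∀ i : Fin k, 0 ≤ a ⬝ᵥ fun j => (b (Fin.castLE hk i) j : ℝ)} ↔
        s ∈ AddSubmonoid.closure S := by
    intro s
    rw [e.mem_closure_iff_repr_nonneg, Set.forall_mem_range]
    simp only [e, Module.Basis.dotProductDualBasis_repr, Set.mem_ofPred_eq, dotProduct]
    norm_cast
  refine ⟨(Set.toFinite S).toFinset, fun g hg => (hS g).2 (AddSubmonoid.subset_closure ?_), ?_⟩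
  · simpa using hg
  · simpa using hS
end

section
/- In a tropical module M (a semimodule over T = ℝ ∪ {-∞} with idempotent addition), if M is generated by a finite set, then every extremal element of M (an element m such that m = a ⊕ b with a,b ∈ M implies a = m or b = m) must appear, up to tropical scalar multiplication, in every generating set of M. -/
/-!
Write `m` as a finite tropical sum `⊕ᵢ tᵢ ⊙ sᵢ` of elements of the generating set. Since `m` is
extremal and nonzero, it equals one of the summands `tᵢ ⊙ sᵢ`, and `tᵢ ≠ -∞` because
`-∞ ⊙ sᵢ = 0`.
-/

/-- A tropical module: a commutative idempotent monoid `(M, ⊕, -∞)` with a scalar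
action of the tropical semifield `T = ℝ ∪ {-∞}` (modeled as `WithBot ℝ`, whose
tropical sum is `max` and tropical product is `+`) satisfying distributivity,
associativity, unitality and the cancellation axiom. -/
structure TropModule (M : Type*) where
  add : M → M → M
  zero : M
  smul : WithBot ℝ → M → M
  add_comm : ∀ a b, add a b = add b a
  add_assoc : ∀ a b c, add (add a b) c = add a (add b c)
  zero_add : ∀ a, add zero a = a
  add_idem : ∀ a, add a a = a
  smul_add : ∀ (t : WithBot ℝ) (a b : M), smul t (add a b) = add (smul t a) (smul t b)
  add_smul : ∀ (s t : WithBot ℝ) (a : M), smul (max s t) a = add (smul s a) (smul t a)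
  mul_smul : ∀ (s t : WithBot ℝ) (a : M), smul s (smul t a) = smul (s + t) a
  one_smul : ∀ a, smul ((0 : ℝ) : WithBot ℝ) a = a
  bot_smul : ∀ a, smul ⊥ a = zero
  smul_zero : ∀ t : WithBot ℝ, smul t zero = zero
  cancel : ∀ (s t : WithBot ℝ) (v : M), smul s v = smul t v → s = t ∨ v = zero

/-- A subset `S` generates the tropical module `M` if every element of `M` is a
finite tropical linear combination `⊕ᵢ tᵢ ⊙ sᵢ` of elements of `S`. -/
def TropModule.Generates {M : Type*} (T : TropModule M) (S : Set M) : Prop :=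
  ∀ m : M, ∃ l : List (WithBot ℝ × M), (∀ p ∈ l, p.2 ∈ S) ∧
    m = (l.map fun p => T.smul p.1 p.2).foldr T.add T.zero

/-- An element `m` of a tropical module is extremal if `m = a ⊕ b` forces
`a = m` or `b = m`. -/
def TropModule.Extremal {M : Type*} (T : TropModule M) (m : M) : Prop :=
  ∀ a b, T.add a b = m → a = m ∨ b = m

namespace TropModule

variable {M : Type*} {T : TropModule M}

theorem Extremal.mem_of_foldr_eq {m : M} (hm : T.Extremal m) (hm0 : m ≠ T.zero) :
    ∀ {l : List M}, l.foldr T.add T.zero = m → m ∈ l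
  | [], h => absurd h.symm hm0
  | a :: l, h => by
    rcases hm a _ h with rfl | h
    · exact List.mem_cons_self
    · exact List.mem_cons_of_mem _ (mem_of_foldr_eq hm hm0 h)

theorem exists_coe_of_smul_ne_zero {t : WithBot ℝ} {s : M} (h : T.smul t s ≠ T.zero) :
    ∃ r : ℝ, (r : WithBot ℝ) = t :=
  WithBot.ne_bot_iff_exists.mp fun ht => h (ht ▸ T.bot_smul s)

end TropModule

theorem extremal_mem_every_generating_set_general {M : Type*} (T : TropModule M)
    (m : M) (hm : T.Extremal m) (hm0 : m ≠ T.zero)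
    (S : Set M) (hS : T.Generates S) :
    ∃ s ∈ S, ∃ t : ℝ, m = T.smul ((t : ℝ) : WithBot ℝ) s := by
  obtain ⟨l, hlS, hl⟩ := hS m
  obtain ⟨⟨t, s⟩, hts_mem, hts⟩ := List.mem_map.mp (hm.mem_of_foldr_eq hm0 hl.symm)
  obtain ⟨r, rfl⟩ := TropModule.exists_coe_of_smul_ne_zero (hts ▸ hm0)
  exact ⟨s, hlS _ hts_mem, r, hts.symm⟩

/-- In a finitely generated tropical module, every (nonzero) extremal element
appears, up to tropical scalar multiplication by a real number, in every
generating set. -/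
theorem extremal_mem_every_generating_set {M : Type*} (T : TropModule M)
    (hfin : ∃ G : Finset M, T.Generates (G : Set M))
    (m : M) (hm : T.Extremal m) (hm0 : m ≠ T.zero)
    (S : Set M) (hS : T.Generates S) :
    ∃ s ∈ S, ∃ t : ℝ, m = T.smul ((t : ℝ) : WithBot ℝ) s :=
  extremal_mem_every_generating_set_general T m hm hm0 S hS
end
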